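/- For all natural numbers i, j and real k, Σ_{r=0}^{j} (-1)^{j-r} · b_{i,r,k} = b_{i,j+1,k-1} + (-1)^{j} · (k-1)^i. -/
import Mathlib

open Finset

noncomputable def msn (i j : ℕ) (k : ℝ) : ℝ :=
  ∑ r ∈ Finset.range (j + 1), (j.choose r : ℝ) * (-1 : ℝ) ^ (j - r) * ((r : ℝ) + k) ^ i

lemma neg_pow_sub (j r : ℕ) (h : r ≤ j) : (-1 : ℝ) ^ (j - r) = (-1) ^ j * (-1) ^ r := by
  have h1 : (-1:ℝ)^(j-r) * (-1)^r = (-1)^j := by rw [← pow_add, Nat.sub_add_cancel h]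
  have h2 : (-1:ℝ)^r * (-1)^r = 1 := by rw [← pow_add, ← two_mul, pow_mul]; norm_num
  rw [← h1, mul_assoc, h2, mul_one]

lemma msn_eq (i j : ℕ) (k : ℝ) :
    msn i j k = (-1)^j * ∑ r ∈ range (j+1), (j.choose r : ℝ) * (-1)^r * ((r:ℝ)+k)^i := by
  unfold msn
  rw [Finset.mul_sum]
  refine Finset.sum_congr rfl fun r hr => ?_
  rw [Finset.mem_range, Nat.lt_succ_iff] at hr
  rw [neg_pow_sub j r hr]; ring

lemma g_succ (i n : ℕ) (x : ℝ) :
    (∑ r ∈ range (n+2), ((n+1).choose r : ℝ) * (-1)^r * ((r:ℝ)+x)^i)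
    = (∑ r ∈ range (n+1), (n.choose r : ℝ) * (-1)^r * ((r:ℝ)+x)^i)
      - ∑ r ∈ range (n+1), (n.choose r : ℝ) * (-1)^r * ((r:ℝ)+(x+1))^i := by
  have hA : (∑ r ∈ range (n+2), ((n+1).choose r : ℝ) * (-1)^r * ((r:ℝ)+x)^i)
      = (∑ r ∈ range (n+1), ((n.choose r : ℝ) + (n.choose (r+1) : ℝ)) * (-1)^(r+1) * (((r:ℝ)+1)+x)^i) + x^i := by
    rw [Finset.sum_range_succ']
    simp [Nat.choose_succ_succ]
  have hB : (∑ r ∈ range (n+1), (n.choose (r+1) : ℝ) * (-1)^(r+1) * (((r:ℝ)+1)+x)^i)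
      = ∑ r ∈ range n, (n.choose (r+1) : ℝ) * (-1)^(r+1) * (((r:ℝ)+1)+x)^i := by
    rw [Finset.sum_range_succ, Nat.choose_succ_self]; simp
  have hC : (∑ r ∈ range (n+1), (n.choose r : ℝ) * (-1)^r * ((r:ℝ)+x)^i)
      = (∑ r ∈ range n, (n.choose (r+1) : ℝ) * (-1)^(r+1) * (((r:ℝ)+1)+x)^i) + x^i := by
    rw [Finset.sum_range_succ']
    norm_num
  have hsplit : (∑ r ∈ range (n+1), ((n.choose r : ℝ) + (n.choose (r+1) : ℝ)) * (-1)^(r+1) * (((r:ℝ)+1)+x)^i)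
      = (∑ r ∈ range (n+1), (n.choose r : ℝ) * (-1)^(r+1) * (((r:ℝ)+1)+x)^i)
        + ∑ r ∈ range (n+1), (n.choose (r+1) : ℝ) * (-1)^(r+1) * (((r:ℝ)+1)+x)^i := by
    rw [← Finset.sum_add_distrib]; apply Finset.sum_congr rfl; intro r _; ring
  have hneg : (∑ r ∈ range (n+1), (n.choose r : ℝ) * (-1)^(r+1) * (((r:ℝ)+1)+x)^i)
      = - ∑ r ∈ range (n+1), (n.choose r : ℝ) * (-1)^r * ((r:ℝ)+(x+1))^i := by
    rw [← Finset.sum_neg_distrib]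
    apply Finset.sum_congr rfl; intro r _
    have : ((r:ℝ)+1)+x = (r:ℝ)+(x+1) := by ring
    rw [this]; ring
  rw [hA, hsplit, hB, hneg, hC]; ring

lemma msn_succ (i n : ℕ) (x : ℝ) : msn i (n+1) x = msn i n (x+1) - msn i n x := by
  rw [msn_eq, msn_eq, msn_eq, g_succ]
  ring

theorem stmt (i j : ℕ) (k : ℝ) : ∑ r ∈ Finset.range (j + 1), (-1 : ℝ) ^ (j - r) * msn i r k = msn i (j + 1) (k - 1) + (-1 : ℝ) ^ j * (k - 1) ^ i := by
  induction j with
  | zero =>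
    simp only [msn, Finset.sum_range_succ, Finset.sum_range_zero, Finset.sum_range_one]
    norm_num
  | succ n ih =>
    rw [Finset.sum_range_succ]
    have hstep : ∀ r ∈ range (n+1), (-1:ℝ)^(n+1-r) * msn i r k = -((-1:ℝ)^(n-r) * msn i r k) := by
      intro r hr
      rw [Finset.mem_range, Nat.lt_succ_iff] at hr
      rw [neg_pow_sub (n+1) r (le_trans hr (Nat.le_succ n)), neg_pow_sub n r hr]
      ring
    rw [Finset.sum_congr rfl hstep, Finset.sum_neg_distrib, ih]
    have h1 : msn i (n+1+1) (k-1) = msn i (n+1) k - msn i (n+1) (k-1) := by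
      rw [msn_succ]; norm_num
    rw [Nat.sub_self]
    rw [h1]
    ring
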